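/- arXiv:1607.00833 — 7 statements merged into one kernel-verified Lean document; each statement's English description precedes it below -/
import Mathlib

section
/- Let c > 0 and let r: [0, T) → (0, ∞) be differentiable with r'(t) = -K(t)·sinh(r(t)) where |K(t)| ≤ c for all t. Then, writing c₀ = tanh(r(0)/2) ∈ (0,1), for all t ∈ [0, T) one has r(t) ≥ ln((1 + c₀ e^{-ct})/(1 - c₀ e^{-ct})) > 0. In particular r(t) is bounded below by a positive constant on any finite time interval. -/
open Real Set

/-!
Along the flow, `log (tanh (r / 2))` has derivative `r' / sinh r = -K ≥ -c`, so
`log (tanh (r t / 2)) + c t` is nondecreasing and `tanh (r t / 2) ≥ c₀ e^{-ct}`.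
The bound follows by applying the increasing function `x ↦ log ((1 + x) / (1 - x)) = 2 artanh x`,
which inverts `x ↦ tanh (x / 2)`.
-/

theorem Real.tanh_pos {x : ℝ} (hx : 0 < x) : 0 < tanh x := by
  rw [tanh_eq_sinh_div_cosh]
  exact div_pos (sinh_pos_iff.mpr hx) (cosh_pos x)

theorem Real.hasDerivAt_tanh (x : ℝ) : HasDerivAt tanh (cosh x ^ 2)⁻¹ x := by
  have h : HasDerivAt (fun y => sinh y / cosh y)
      ((cosh x * cosh x - sinh x * sinh x) / cosh x ^ 2) x :=
    (hasDerivAt_sinh x).div (hasDerivAt_cosh x) (cosh_pos x).ne'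
  rw [show tanh = fun y => sinh y / cosh y from funext tanh_eq_sinh_div_cosh]
  convert h using 1
  rw [show cosh x * cosh x - sinh x * sinh x = 1 by linear_combination cosh_sq x, one_div]

theorem hasDerivAt_log_tanh_half {x : ℝ} (hx : x ≠ 0) :
    HasDerivAt (fun y => log (tanh (y / 2))) (sinh x)⁻¹ x := by
  have htanh : tanh (x / 2) ≠ 0 := by
    rw [tanh_eq_sinh_div_cosh]
    exact div_ne_zero (sinh_ne_zero.mpr (by simpa using hx)) (cosh_pos _).ne'
  have h : HasDerivAt (fun y => tanh (y / 2)) ((cosh (x / 2) ^ 2)⁻¹ * (1 / 2)) x :=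
    (hasDerivAt_tanh (x / 2)).comp (h := fun y => y / 2) x ((hasDerivAt_id' x).div_const 2)
  convert h.log htanh using 1
  have hsinh : sinh x = 2 * sinh (x / 2) * cosh (x / 2) := by
    rw [← sinh_two_mul, mul_div_cancel₀ x two_ne_zero]
  rw [hsinh, tanh_eq_sinh_div_cosh]
  have hcosh := (cosh_pos (x / 2)).ne'
  field_simp

theorem log_one_add_div_one_sub_eq_two_mul_artanh {x : ℝ} (hx : x ∈ Icc (-1) 1) :
    log ((1 + x) / (1 - x)) = 2 * artanh x := by
  rw [artanh_eq_half_log hx]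
  ring

section RicciFlow

variable {T c : ℝ} {r K : ℝ → ℝ}

theorem monotoneOn_log_tanh_half_add_mul
    (hpos : ∀ t ∈ Ico (0:ℝ) T, 0 < r t)
    (hderiv : ∀ t ∈ Ico (0:ℝ) T, HasDerivAt r (-(K t) * sinh (r t)) t)
    (hK : ∀ t ∈ Ico (0:ℝ) T, K t ≤ c) :
    MonotoneOn (fun t => log (tanh (r t / 2)) + c * t) (Ico 0 T) := by
  have hg : ∀ t ∈ Ico (0:ℝ) T,
      HasDerivAt (fun t => log (tanh (r t / 2)) + c * t) (-(K t) + c) t := by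
    intro t ht
    have hsinh : sinh (r t) ≠ 0 := sinh_ne_zero.mpr (hpos t ht).ne'
    have h : HasDerivAt (fun t => log (tanh (r t / 2)) + c * t)
        ((sinh (r t))⁻¹ * (-(K t) * sinh (r t)) + c * 1) t :=
      ((hasDerivAt_log_tanh_half (hpos t ht).ne').comp (h := r) t (hderiv t ht)).add
        ((hasDerivAt_id' t).const_mul c)
    convert h using 1
    field_simp
  refine monotoneOn_of_hasDerivWithinAt_nonneg (convex_Ico 0 T)
    (fun t ht => (hg t ht).continuousAt.continuousWithinAt)
    (fun t ht => (hg t (interior_subset ht)).hasDerivWithinAt) fun t ht => ?_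
  linarith [hK t (interior_subset ht)]

theorem tanh_half_mul_exp_le_tanh_half
    (hpos : ∀ t ∈ Ico (0:ℝ) T, 0 < r t)
    (hderiv : ∀ t ∈ Ico (0:ℝ) T, HasDerivAt r (-(K t) * sinh (r t)) t)
    (hK : ∀ t ∈ Ico (0:ℝ) T, K t ≤ c) {t : ℝ} (ht : t ∈ Ico 0 T) :
    tanh (r 0 / 2) * exp (-c * t) ≤ tanh (r t / 2) := by
  have h0 : (0:ℝ) ∈ Ico 0 T := ⟨le_rfl, ht.1.trans_lt ht.2⟩
  have hmono := monotoneOn_log_tanh_half_add_mul hpos hderiv hK h0 ht ht.1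
  simp only [mul_zero, add_zero] at hmono
  have h := exp_le_exp.mpr
    (show log (tanh (r 0 / 2)) + -c * t ≤ log (tanh (r t / 2)) by linarith)
  rwa [exp_add, exp_log (tanh_pos (half_pos (hpos 0 h0))),
    exp_log (tanh_pos (half_pos (hpos t ht)))] at h

end RicciFlow

theorem ricci_flow_radius_lower_bound_general (T c : ℝ) (hT : 0 < T)
    (r K : ℝ → ℝ)
    (hpos : ∀ t ∈ Ico (0:ℝ) T, 0 < r t)
    (hderiv : ∀ t ∈ Ico (0:ℝ) T, HasDerivAt r (-(K t) * Real.sinh (r t)) t)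
    (hK : ∀ t ∈ Ico (0:ℝ) T, |K t| ≤ c) :
    Real.tanh (r 0 / 2) ∈ Ioo (0:ℝ) 1 ∧
    ∀ t ∈ Ico (0:ℝ) T,
      0 < Real.log ((1 + Real.tanh (r 0 / 2) * Real.exp (-c * t)) /
            (1 - Real.tanh (r 0 / 2) * Real.exp (-c * t))) ∧
      Real.log ((1 + Real.tanh (r 0 / 2) * Real.exp (-c * t)) /
            (1 - Real.tanh (r 0 / 2) * Real.exp (-c * t))) ≤ r t := by
  have hc₀ : 0 < tanh (r 0 / 2) := tanh_pos (half_pos (hpos 0 ⟨le_rfl, hT⟩))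
  refine ⟨⟨hc₀, tanh_lt_one _⟩, fun t ht => ?_⟩
  set a := tanh (r 0 / 2) * exp (-c * t)
  have ha_pos : 0 < a := mul_pos hc₀ (exp_pos _)
  have ha_le : a ≤ tanh (r t / 2) :=
    tanh_half_mul_exp_le_tanh_half hpos hderiv (fun s hs => (abs_le.mp (hK s hs)).2) ht
  have ha_lt_one : a < 1 := ha_le.trans_lt (tanh_lt_one _)
  rw [log_one_add_div_one_sub_eq_two_mul_artanh ⟨by linarith, ha_lt_one.le⟩]
  refine ⟨by linarith [artanh_pos ⟨ha_pos, ha_lt_one⟩], ?_⟩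
  calc 2 * artanh a ≤ 2 * artanh (tanh (r t / 2)) := by
        gcongr
        exact artanh_le_artanh (by linarith) (tanh_lt_one _) ha_le
    _ = r t := by rw [artanh_tanh]; ring

/-- Lower-bound estimate along the hyperbolic combinatorial Ricci flow
`r' = -K sinh r` with `|K| ≤ c`: writing `c₀ = tanh (r 0 / 2) ∈ (0,1)`, one has
`r t ≥ ln ((1 + c₀ e^{-ct}) / (1 - c₀ e^{-ct})) > 0` on `[0, T)`. -/
theorem ricci_flow_radius_lower_bound (T c : ℝ) (hT : 0 < T) (hc : 0 < c)
    (r K : ℝ → ℝ)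
    (hpos : ∀ t ∈ Ico (0:ℝ) T, 0 < r t)
    (hderiv : ∀ t ∈ Ico (0:ℝ) T, HasDerivAt r (-(K t) * Real.sinh (r t)) t)
    (hK : ∀ t ∈ Ico (0:ℝ) T, |K t| ≤ c) :
    Real.tanh (r 0 / 2) ∈ Ioo (0:ℝ) 1 ∧
    ∀ t ∈ Ico (0:ℝ) T,
      0 < Real.log ((1 + Real.tanh (r 0 / 2) * Real.exp (-c * t)) /
            (1 - Real.tanh (r 0 / 2) * Real.exp (-c * t))) ∧
      Real.log ((1 + Real.tanh (r 0 / 2) * Real.exp (-c * t)) /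
            (1 - Real.tanh (r 0 / 2) * Real.exp (-c * t))) ≤ r t :=
  ricci_flow_radius_lower_bound_general T c hT r K hpos hderiv hK
end

section
/- For a generalized hyperbolic triangle with edge lengths x₁, x₂, x₃ > 0, the extended inner angle θ̃_i(x₁,x₂,x₃) = Λ((cosh x_j · cosh x_k - cosh x_i)/(sinh x_j · sinh x_k)) is continuous on ℝ³_{>0}, equals π when x_i ≥ x_j + x_k, and equals 0 when x_j ≥ x_i + x_k or x_k ≥ x_i + x_j. -/
open Real

noncomputable def Lambda (x : ℝ) : ℝ :=
  if x ≤ -1 then π else if x ≤ 1 then arccos x else 0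

/-- Extended hyperbolic inner angle opposite the edge of length `x₁` in a generalized
hyperbolic triangle with edge lengths `x₁, x₂, x₃`. -/
noncomputable def thetaH (x₁ x₂ x₃ : ℝ) : ℝ :=
  Lambda ((Real.cosh x₂ * Real.cosh x₃ - Real.cosh x₁) / (Real.sinh x₂ * Real.sinh x₃))

lemma Lambda_eq_arccos (x : ℝ) : Lambda x = arccos x := by
  unfold Lambda
  split_ifs with h₁ h₂
  · rw [arccos, arcsin_of_le_neg_one h₁]; ring
  · rfl
  · rw [arccos, arcsin_of_one_le (le_of_not_ge h₂)]; ring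

/-- The extended hyperbolic inner angle is continuous on `ℝ³_{>0}`, equals `π` when
`x₁ ≥ x₂ + x₃`, and equals `0` when `x₂ ≥ x₁ + x₃` or `x₃ ≥ x₁ + x₂`. -/
theorem extended_hyperbolic_angle_properties :
    ContinuousOn (fun x : ℝ × ℝ × ℝ => thetaH x.1 x.2.1 x.2.2)
      {x : ℝ × ℝ × ℝ | 0 < x.1 ∧ 0 < x.2.1 ∧ 0 < x.2.2} ∧
    (∀ x₁ x₂ x₃ : ℝ, 0 < x₁ → 0 < x₂ → 0 < x₃ → x₂ + x₃ ≤ x₁ → thetaH x₁ x₂ x₃ = π) ∧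
    (∀ x₁ x₂ x₃ : ℝ, 0 < x₁ → 0 < x₂ → 0 < x₃ →
      (x₁ + x₃ ≤ x₂ ∨ x₁ + x₂ ≤ x₃) → thetaH x₁ x₂ x₃ = 0) := by
  refine ⟨?_, ?_, ?_⟩
  · have : (fun x : ℝ × ℝ × ℝ => thetaH x.1 x.2.1 x.2.2) =
        fun x : ℝ × ℝ × ℝ => arccos ((Real.cosh x.2.1 * Real.cosh x.2.2 - Real.cosh x.1) /
          (Real.sinh x.2.1 * Real.sinh x.2.2)) := by
      funext x; exact Lambda_eq_arccos _
    rw [this]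
    apply Real.continuous_arccos.comp_continuousOn
    apply ContinuousOn.div
    · fun_prop
    · fun_prop
    · rintro ⟨a, b, c⟩ ⟨_, hb, hc⟩
      exact (mul_pos (Real.sinh_pos_iff.2 hb) (Real.sinh_pos_iff.2 hc)).ne'
  · intro x₁ x₂ x₃ h₁ h₂ h₃ hle
    have hs : 0 < Real.sinh x₂ * Real.sinh x₃ :=
      mul_pos (Real.sinh_pos_iff.2 h₂) (Real.sinh_pos_iff.2 h₃)
    have hc : Real.cosh (x₂ + x₃) ≤ Real.cosh x₁ := by
      rw [Real.cosh_le_cosh, abs_of_pos (by linarith), abs_of_pos h₁]; exact hle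
    rw [Real.cosh_add] at hc
    have harg : (Real.cosh x₂ * Real.cosh x₃ - Real.cosh x₁) / (Real.sinh x₂ * Real.sinh x₃)
        ≤ -1 := by
      rw [div_le_iff₀ hs]; linarith
    unfold thetaH Lambda
    rw [if_pos harg]
  · intro x₁ x₂ x₃ h₁ h₂ h₃ hle
    have hs : 0 < Real.sinh x₂ * Real.sinh x₃ :=
      mul_pos (Real.sinh_pos_iff.2 h₂) (Real.sinh_pos_iff.2 h₃)
    have hc : Real.cosh x₁ ≤ Real.cosh (x₂ - x₃) := by
      rw [Real.cosh_le_cosh, abs_of_pos h₁]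
      rcases hle with h | h
      · rw [abs_of_pos (by linarith : (0:ℝ) < x₂ - x₃)]; linarith
      · rw [abs_of_neg (by linarith : x₂ - x₃ < 0)]; linarith
    rw [Real.cosh_sub] at hc
    have harg : 1 ≤ (Real.cosh x₂ * Real.cosh x₃ - Real.cosh x₁) /
        (Real.sinh x₂ * Real.sinh x₃) := by
      rw [le_div_iff₀ hs]; linarith
    unfold thetaH Lambda
    split_ifs with ha hb
    · linarith
    · have : (Real.cosh x₂ * Real.cosh x₃ - Real.cosh x₁) /
          (Real.sinh x₂ * Real.sinh x₃) = 1 := le_antisymm hb harg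
      rw [this, arccos_one]
    · rfl
end

section
/- In a hyperbolic triangle with side lengths l_ij, l_jk, l_ik satisfying the strict triangle inequalities, the inner angles θ_i, θ_j, θ_k given by the hyperbolic law of cosines satisfy θ_i + θ_j + θ_k < π. -/
/-!
Write `A, B, C` for the three angles. Since `cos A + cos B > 0`, `A + B < π`, so
`A + B + C < π` amounts to `cos C > -cos (A + B) = sin A sin B - cos A cos B`. With
`x = cosh l_ij` and `G = 1 + 2xyz - x² - y² - z²` (positive exactly by the triangle
inequalities), `sin A sin B = G / (sinh² l_ij sinh l_ik sinh l_jk)` while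
`cos C + cos A cos B` is `x > 1` times the same quantity.
-/

open Real

theorem arccos_add_arccos_lt_pi {u v : ℝ} (hu : u ≤ 1) (hv : v ≤ 1) (huv : 0 < u + v) :
    arccos u + arccos v < π := by
  have hlt : arccos u < arccos (-v) := arccos_lt_arccos (by linarith) (by linarith) hu
  rw [arccos_neg] at hlt
  linarith

theorem arccos_add_arccos_add_arccos_lt_pi {u v w : ℝ} (hu : u ∈ Set.Icc (-1) 1)
    (hv : v ∈ Set.Icc (-1) 1) (hw : w ≤ 1) (huv : 0 < u + v)
    (h : √(1 - u ^ 2) * √(1 - v ^ 2) < w + u * v) :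
    arccos u + arccos v + arccos w < π := by
  have hsum := arccos_add_arccos_lt_pi hu.2 hv.2 huv
  set t := π - (arccos u + arccos v)
  have hcos : cos t < w := by
    rw [cos_pi_sub, cos_add, cos_arccos hu.1 hu.2, cos_arccos hv.1 hv.2, sin_arccos,
      sin_arccos]
    linarith
  have ht : arccos w < arccos (cos t) := arccos_lt_arccos (neg_one_le_cos t) hcos hw
  rw [arccos_cos (by linarith) (by linarith [arccos_nonneg u, arccos_nonneg v])] at ht
  linarith

noncomputable def hypCosAngle (a b c : ℝ) : ℝ :=
  (cosh a * cosh b - cosh c) / (sinh a * sinh b)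

/-- The determinant of `!![1, cosh a, cosh b; cosh a, 1, cosh c; cosh b, cosh c, 1]`. -/
noncomputable def coshGram (a b c : ℝ) : ℝ :=
  1 + 2 * cosh a * cosh b * cosh c - cosh a ^ 2 - cosh b ^ 2 - cosh c ^ 2

section Triangle

variable {a b c : ℝ}

theorem abs_cosh_mul_cosh_sub_cosh_lt (h₁ : |a - b| < c) (h₂ : c < a + b) :
    |cosh a * cosh b - cosh c| < sinh a * sinh b := by
  have hc : 0 < c := (abs_nonneg _).trans_lt h₁
  have hlo : cosh (a - b) < cosh c := by rwa [cosh_lt_cosh, abs_of_pos hc]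
  have hhi : cosh c < cosh (a + b) := by
    rwa [cosh_lt_cosh, abs_of_pos hc, abs_of_pos (hc.trans h₂)]
  rw [cosh_sub] at hlo
  rw [cosh_add] at hhi
  rw [abs_lt]; constructor <;> linarith

theorem sinh_mul_sinh_pos (h₁ : |a - b| < c) (h₂ : c < a + b) : 0 < sinh a * sinh b :=
  (abs_nonneg _).trans_lt (abs_cosh_mul_cosh_sub_cosh_lt h₁ h₂)

theorem abs_hypCosAngle_lt_one (h₁ : |a - b| < c) (h₂ : c < a + b) :
    |hypCosAngle a b c| < 1 := by
  have hpos := sinh_mul_sinh_pos h₁ h₂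
  rw [hypCosAngle, abs_div, abs_of_pos hpos, div_lt_one hpos]
  exact abs_cosh_mul_cosh_sub_cosh_lt h₁ h₂

theorem coshGram_eq (a b c : ℝ) :
    coshGram a b c = (sinh a * sinh b) ^ 2 - (cosh a * cosh b - cosh c) ^ 2 := by
  rw [coshGram, mul_pow, sinh_sq, sinh_sq]; ring

theorem coshGram_pos (h₁ : |a - b| < c) (h₂ : c < a + b) : 0 < coshGram a b c := by
  rw [coshGram_eq, sub_pos, sq_lt_sq, abs_of_pos (sinh_mul_sinh_pos h₁ h₂)]
  exact abs_cosh_mul_cosh_sub_cosh_lt h₁ h₂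

theorem sqrt_one_sub_hypCosAngle_sq (h : 0 < sinh a * sinh b) :
    √(1 - hypCosAngle a b c ^ 2) = √(coshGram a b c) / (sinh a * sinh b) := by
  have : 1 - hypCosAngle a b c ^ 2 = coshGram a b c / (sinh a * sinh b) ^ 2 := by
    rw [coshGram_eq, hypCosAngle, div_pow, one_sub_div (pow_ne_zero 2 h.ne')]
  rw [this, sqrt_div' _ (sq_nonneg _), sqrt_sq h.le]

theorem hypCosAngle_add_hypCosAngle_pos (h₁ : |a - b| < c) (h₂ : c < a + b) :
    0 < hypCosAngle a b c + hypCosAngle a c b := by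
  obtain ⟨hab, hba⟩ := abs_sub_lt_iff.1 h₁
  have hb : 0 < sinh b := sinh_pos_iff.2 (by linarith)
  have hc : 0 < sinh c := sinh_pos_iff.2 (by linarith)
  have ha : 0 < sinh a := sinh_pos_iff.2 (by linarith)
  have hbc : cosh (b - c) < cosh a := by
    rw [cosh_lt_cosh, abs_of_pos (by linarith : 0 < a), abs_sub_lt_iff]; constructor <;> linarith
  rw [cosh_sub] at hbc
  have key : hypCosAngle a b c + hypCosAngle a c b =
      (cosh b * sinh c + cosh c * sinh b) * (cosh a - (cosh b * cosh c - sinh b * sinh c)) /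
        (sinh a * sinh b * sinh c) := by
    rw [hypCosAngle, hypCosAngle]
    field_simp
    linear_combination (-(cosh b * sinh b)) * sinh_sq c + (-(cosh c * sinh c)) * sinh_sq b
  rw [key]
  exact div_pos (mul_pos (by positivity) (by linarith)) (by positivity)

theorem coshGram_swap (a b c : ℝ) : coshGram a c b = coshGram a b c := by
  unfold coshGram; ring

theorem hypCosAngle_add_hypCosAngle_mul_hypCosAngle (ha : sinh a ≠ 0) (hb : sinh b ≠ 0)
    (hc : sinh c ≠ 0) :
    hypCosAngle b c a + hypCosAngle a b c * hypCosAngle a c b =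
      cosh a * coshGram a b c / (sinh a ^ 2 * sinh b * sinh c) := by
  unfold hypCosAngle coshGram
  field_simp
  linear_combination (cosh b * cosh c - cosh a) * sinh_sq a

theorem sqrt_mul_sqrt_lt_hypCosAngle_add_mul (h₁ : |a - b| < c) (h₂ : c < a + b) :
    √(1 - hypCosAngle a b c ^ 2) * √(1 - hypCosAngle a c b ^ 2) <
      hypCosAngle b c a + hypCosAngle a b c * hypCosAngle a c b := by
  obtain ⟨hab, hba⟩ := abs_sub_lt_iff.1 h₁
  have ha : 0 < sinh a := sinh_pos_iff.2 (by linarith)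
  have hb : 0 < sinh b := sinh_pos_iff.2 (by linarith)
  have hc : 0 < sinh c := sinh_pos_iff.2 (by linarith)
  have hG := coshGram_pos h₁ h₂
  rw [sqrt_one_sub_hypCosAngle_sq (mul_pos ha hb), sqrt_one_sub_hypCosAngle_sq (mul_pos ha hc),
    coshGram_swap a b c, div_mul_div_comm, mul_self_sqrt hG.le,
    hypCosAngle_add_hypCosAngle_mul_hypCosAngle ha.ne' hb.ne' hc.ne']
  have hcosh : 1 < cosh a := one_lt_cosh.2 (by linarith)
  calc coshGram a b c / (sinh a * sinh b * (sinh a * sinh c))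
      = coshGram a b c / (sinh a ^ 2 * sinh b * sinh c) := by ring_nf
    _ < cosh a * coshGram a b c / (sinh a ^ 2 * sinh b * sinh c) := by
      gcongr; exact lt_mul_of_one_lt_left hG hcosh

end Triangle

theorem hyperbolic_angle_sum_lt_pi_general (lij ljk lik : ℝ)
    (h₁ : lij < ljk + lik) (h₂ : ljk < lij + lik) (h₃ : lik < lij + ljk) :
    arccos ((Real.cosh lij * Real.cosh lik - Real.cosh ljk) /
        (Real.sinh lij * Real.sinh lik)) +
      arccos ((Real.cosh lij * Real.cosh ljk - Real.cosh lik) /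
        (Real.sinh lij * Real.sinh ljk)) +
      arccos ((Real.cosh lik * Real.cosh ljk - Real.cosh lij) /
        (Real.sinh lik * Real.sinh ljk)) < π := by
  have h : |lij - lik| < ljk := abs_sub_lt_iff.2 ⟨by linarith, by linarith⟩
  have hA := abs_hypCosAngle_lt_one h h₂
  have hB := abs_hypCosAngle_lt_one (a := lij) (b := ljk) (c := lik)
    (abs_sub_lt_iff.2 ⟨by linarith, by linarith⟩) h₃
  have hC := abs_hypCosAngle_lt_one (a := lik) (b := ljk) (c := lij)
    (abs_sub_lt_iff.2 ⟨by linarith, by linarith⟩) (by linarith)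
  exact arccos_add_arccos_add_arccos_lt_pi (abs_le.1 hA.le) (abs_le.1 hB.le)
    (abs_le.1 hC.le).2 (hypCosAngle_add_hypCosAngle_pos h h₂)
    (sqrt_mul_sqrt_lt_hypCosAngle_add_mul h h₂)

/-- Angle deficit in hyperbolic triangles: if side lengths `lij, ljk, lik` satisfy the
strict triangle inequalities, the inner angles given by the hyperbolic law of cosines
sum to strictly less than `π`. -/
theorem hyperbolic_angle_sum_lt_pi (lij ljk lik : ℝ)
    (hij : 0 < lij) (hjk : 0 < ljk) (hik : 0 < lik)
    (h₁ : lij < ljk + lik) (h₂ : ljk < lij + lik) (h₃ : lik < lij + ljk) :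
    arccos ((Real.cosh lij * Real.cosh lik - Real.cosh ljk) /
        (Real.sinh lij * Real.sinh lik)) +
      arccos ((Real.cosh lij * Real.cosh ljk - Real.cosh lik) /
        (Real.sinh lij * Real.sinh ljk)) +
      arccos ((Real.cosh lik * Real.cosh ljk - Real.cosh lij) /
        (Real.sinh lik * Real.sinh ljk)) < π :=
  hyperbolic_angle_sum_lt_pi_general lij ljk lik h₁ h₂ h₃
end

section
/- Fix r̄_j, r̄_k > 0 and inversive distances I_ij, I_ik, I_jk ≥ 0, and define f(r_i) = arccosh(cosh r_i cosh r̄_j + I_ij sinh r_i sinh r̄_j) + arccosh(cosh r_i cosh r̄_k + I_ik sinh r_i sinh r̄_k) - arccosh(cosh r̄_j cosh r̄_k + I_jk sinh r̄_j sinh r̄_k) for r_i > 0. Then f is strictly increasing, f(r_i) → +∞ as r_i → +∞, and the limit of f as r_i → 0⁺ is negative if I_jk > 1, zero if I_jk = 1, and positive if 0 ≤ I_jk < 1. -/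
/-!
Each edge length `l(x) = arcosh (cosh x cosh s + I sinh x sinh s)` with `I, s ≥ 0` is strictly
increasing in `x ≥ 0`, bounded below by `x` (as its argument is at least `cosh x`), and continuous
with value `s` at `x = 0`. The sign of `r̄_j + r̄_k - l_jk` is read off from
`cosh l_jk = cosh (r̄_j + r̄_k) + (I_jk - 1) sinh r̄_j sinh r̄_k`.
-/

open Real Set Filter

/-- The inverse hyperbolic cosine, `arcosh x = log (x + √(x² - 1))` (for `x ≥ 1`). -/
noncomputable def arcosh (x : ℝ) : ℝ := Real.log (x + Real.sqrt (x ^ 2 - 1))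

open Topology

noncomputable def edgeCosh (I x s : ℝ) : ℝ := cosh x * cosh s + I * sinh x * sinh s

/-- Definitionally equal to `_root_.arcosh (edgeCosh I x s)`: both `arcosh`s unfold to
`log (x + √(x ^ 2 - 1))`, which lets the main proof apply the lemmas below with `exact`. -/
noncomputable def edgeLength (I x s : ℝ) : ℝ := Real.arcosh (edgeCosh I x s)

theorem edgeCosh_eq_cosh_add (I x s : ℝ) :
    edgeCosh I x s = cosh (x + s) + (I - 1) * sinh x * sinh s := by
  rw [edgeCosh, cosh_add]
  ring

section

variable {I x s : ℝ}

theorem cosh_le_edgeCosh (hI : 0 ≤ I) (hx : 0 ≤ x) (hs : 0 ≤ s) : cosh x ≤ edgeCosh I x s := by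
  have hcosh : cosh x ≤ cosh x * cosh s := le_mul_of_one_le_right (cosh_pos x).le (one_le_cosh s)
  have hsinh : 0 ≤ I * sinh x * sinh s :=
    mul_nonneg (mul_nonneg hI (sinh_nonneg_iff.mpr hx)) (sinh_nonneg_iff.mpr hs)
  rw [edgeCosh]
  linarith

theorem one_le_edgeCosh (hI : 0 ≤ I) (hx : 0 ≤ x) (hs : 0 ≤ s) : 1 ≤ edgeCosh I x s :=
  (one_le_cosh x).trans (cosh_le_edgeCosh hI hx hs)

theorem edgeCosh_strictMonoOn (hI : 0 ≤ I) (hs : 0 ≤ s) :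
    StrictMonoOn (fun x => edgeCosh I x s) (Ici 0) := by
  have hcosh : StrictMonoOn (fun x => cosh x * cosh s) (Ici 0) := fun x hx y hy hxy =>
    mul_lt_mul_of_pos_right (cosh_strictMonoOn hx hy hxy) (cosh_pos s)
  have hsinh : MonotoneOn (fun x => I * sinh x * sinh s) (Ici 0) := fun _ _ _ _ hxy =>
    mul_le_mul_of_nonneg_right (mul_le_mul_of_nonneg_left (sinh_le_sinh.mpr hxy) hI)
      (sinh_nonneg_iff.mpr hs)
  exact hcosh.add_monotone hsinh

theorem edgeLength_strictMonoOn (hI : 0 ≤ I) (hs : 0 ≤ s) :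
    StrictMonoOn (fun x => edgeLength I x s) (Ici 0) :=
  strictMonoOn_arcosh.comp (edgeCosh_strictMonoOn hI hs) fun _ hx =>
    zero_lt_one.trans_le (one_le_edgeCosh hI hx hs)

theorem le_edgeLength (hI : 0 ≤ I) (hx : 0 ≤ x) (hs : 0 ≤ s) : x ≤ edgeLength I x s := by
  calc x = Real.arcosh (cosh x) := (arcosh_cosh hx).symm
    _ ≤ edgeLength I x s :=
      (arcosh_le_arcosh (cosh_pos x) ((cosh_pos x).trans_le (cosh_le_edgeCosh hI hx hs))).mpr
        (cosh_le_edgeCosh hI hx hs)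

theorem tendsto_edgeLength_nhdsGT_zero (hI : 0 ≤ I) (hs : 0 ≤ s) :
    Tendsto (fun x => edgeLength I x s) (𝓝[>] 0) (𝓝 s) := by
  have hcont : ContinuousOn (fun x => edgeLength I x s) (Ici 0) :=
    continuousOn_arcosh.comp (by unfold edgeCosh; fun_prop) fun x hx => one_le_edgeCosh hI hx hs
  have hzero : edgeLength I 0 s = s := by simp [edgeLength, edgeCosh, arcosh_cosh hs]
  simpa [hzero] using (hcont 0 self_mem_Ici).tendsto.mono_left (nhdsWithin_mono _ Ioi_subset_Ici_self)

theorem edgeLength_one (hx : 0 ≤ x) (hs : 0 ≤ s) : edgeLength 1 x s = x + s := by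
  rw [edgeLength, edgeCosh_eq_cosh_add, sub_self, zero_mul, zero_mul, add_zero,
    arcosh_cosh (add_nonneg hx hs)]

theorem edgeLength_lt_add (hI₀ : 0 ≤ I) (hI : I < 1) (hx : 0 < x) (hs : 0 < s) :
    edgeLength I x s < x + s := by
  have hlt : edgeCosh I x s < cosh (x + s) := by
    rw [edgeCosh_eq_cosh_add]
    nlinarith [mul_pos (sinh_pos_iff.mpr hx) (sinh_pos_iff.mpr hs)]
  calc edgeLength I x s < Real.arcosh (cosh (x + s)) :=
        (arcosh_lt_arcosh (zero_lt_one.trans_le (one_le_edgeCosh hI₀ hx.le hs.le))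
          (cosh_pos _)).mpr hlt
    _ = x + s := arcosh_cosh (by positivity)

theorem add_lt_edgeLength (hI : 1 < I) (hx : 0 < x) (hs : 0 < s) : x + s < edgeLength I x s := by
  have hlt : cosh (x + s) < edgeCosh I x s := by
    rw [edgeCosh_eq_cosh_add]
    nlinarith [mul_pos (sinh_pos_iff.mpr hx) (sinh_pos_iff.mpr hs)]
  calc x + s = Real.arcosh (cosh (x + s)) := (arcosh_cosh (by positivity)).symm
    _ < edgeLength I x s := (arcosh_lt_arcosh (cosh_pos _) ((cosh_pos _).trans hlt)).mpr hlt

end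

/-- The triangle-inequality defect `f(r_i) = l_ij + l_ik - l_jk` in a hyperbolic
inversive distance triangle: `f` is strictly increasing on `(0,∞)`, tends to `+∞` at
`+∞`, and its limit at `0⁺` is `r̄_j + r̄_k - l_jk`, which is negative when `I_jk > 1`,
zero when `I_jk = 1`, and positive when `0 ≤ I_jk < 1`. -/
theorem defect_function_properties (rj rk Iij Iik Ijk : ℝ)
    (hrj : 0 < rj) (hrk : 0 < rk) (hIij : 0 ≤ Iij) (hIik : 0 ≤ Iik) (hIjk : 0 ≤ Ijk) :
    let f : ℝ → ℝ := fun ri =>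
      _root_.arcosh (Real.cosh ri * Real.cosh rj + Iij * Real.sinh ri * Real.sinh rj) +
      _root_.arcosh (Real.cosh ri * Real.cosh rk + Iik * Real.sinh ri * Real.sinh rk) -
      _root_.arcosh (Real.cosh rj * Real.cosh rk + Ijk * Real.sinh rj * Real.sinh rk)
    StrictMonoOn f (Ioi 0) ∧
    Tendsto f atTop atTop ∧
    Tendsto f (nhdsWithin 0 (Ioi 0))
      (nhds (rj + rk - _root_.arcosh (Real.cosh rj * Real.cosh rk + Ijk * Real.sinh rj * Real.sinh rk))) ∧
    (1 < Ijk → rj + rk - _root_.arcosh (Real.cosh rj * Real.cosh rk + Ijk * Real.sinh rj * Real.sinh rk) < 0) ∧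
    (Ijk = 1 → rj + rk - _root_.arcosh (Real.cosh rj * Real.cosh rk + Ijk * Real.sinh rj * Real.sinh rk) = 0) ∧
    (Ijk < 1 → 0 < rj + rk - _root_.arcosh (Real.cosh rj * Real.cosh rk + Ijk * Real.sinh rj * Real.sinh rk)) := by
  intro f
  set c := _root_.arcosh (cosh rj * cosh rk + Ijk * sinh rj * sinh rk)
  have hsum := (edgeLength_strictMonoOn hIij hrj.le).add (edgeLength_strictMonoOn hIik hrk.le)
  refine ⟨?_, ?_, ?_, ?_, ?_, ?_⟩
  · exact fun x hx y hy hxy =>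
      sub_lt_sub_right (hsum (Ioi_subset_Ici_self hx) (Ioi_subset_Ici_self hy) hxy) c
  · refine tendsto_atTop_mono' atTop ?_
      ((tendsto_atTop_add_const_right atTop (-c) tendsto_id).congr fun _ => (sub_eq_add_neg _ _).symm)
    filter_upwards [eventually_ge_atTop 0] with ri hri
    have hj := le_edgeLength hIij hri hrj.le
    have hk := le_edgeLength hIik hri hrk.le
    change ri - c ≤ edgeLength Iij ri rj + edgeLength Iik ri rk - c
    linarith
  · exact ((tendsto_edgeLength_nhdsGT_zero hIij hrj.le).add
      (tendsto_edgeLength_nhdsGT_zero hIik hrk.le)).sub_const c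
  · exact fun h => sub_neg.mpr (add_lt_edgeLength h hrj hrk)
  · rintro rfl
    exact sub_eq_zero.mpr (edgeLength_one hrj.le hrk.le).symm
  · exact fun h => sub_pos.mpr (edgeLength_lt_add hIjk h hrj hrk)
end

section
/- Let f: ℝⁿ_{<0} → ℝ be continuous. Suppose there is u* ∈ ℝⁿ_{<0} such that for every unit direction ξ, the function t ↦ f(u* + tξ) is monotone increasing on [0, a_ξ), where a_ξ ∈ (0, +∞] is the exit time of the ray u* + tξ from ℝⁿ_{<0}, and f(u* + tξ) → +∞ as t → a_ξ whenever a_ξ = +∞. Then f(x) → +∞ as x → ∞ within ℝⁿ_{<0} (i.e., as ‖x‖ → ∞ or x approaches the boundary at infinity). -/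
/-!
Cover the unit sphere of directions by neighbourhoods, one for each direction `ξ`, on which
`f ≥ M` beyond some radius along every ray that is still in the orthant. If the ray in
direction `ξ` stays in the orthant, `f` exceeds `M` at some point of it; by continuity this
persists for nearby directions, and monotonicity carries it outwards. Otherwise the ray crosses
a face `{x_i = 0}`, so `ξ_i > 0`, and all nearby rays have left the orthant beyond some radius.
Compactness of the sphere makes the radius uniform.
-/

open Set Filter Topology Metric Bornology

section RaysInNormedSpace

variable {E : Type*} [NormedAddCommGroup E] [NormedSpace ℝ E]

theorem tendsto_apply_add_smul_atTop (ℓ : StrongDual ℝ E) (x₀ : E) {ξ : E} (hξ : 0 < ℓ ξ) :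
    Tendsto (fun p : ℝ × E => ℓ (x₀ + p.1 • p.2)) (atTop ×ˢ 𝓝 ξ) atTop := by
  simp only [map_add, map_smul, smul_eq_mul]
  exact tendsto_atTop_add_const_left _ _
    (tendsto_fst.atTop_mul_pos hξ ((ℓ.continuous.tendsto ξ).comp tendsto_snd))

theorem eventually_le_of_lt_on_ray {f : E → ℝ} {U : Set E} (hU : IsOpen U)
    (hf : ContinuousOn f U) {x₀ ξ : E} {t₀ M : ℝ}
    (hmono : ∀ ξ' : E, ‖ξ'‖ = 1 →
      MonotoneOn (fun t : ℝ => f (x₀ + t • ξ')) {t : ℝ | 0 ≤ t ∧ x₀ + t • ξ' ∈ U})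
    (ht₀ : 0 ≤ t₀) (hmem : x₀ + t₀ • ξ ∈ U) (hlt : M < f (x₀ + t₀ • ξ)) :
    ∀ᶠ p : ℝ × E in atTop ×ˢ 𝓝 ξ,
      ‖p.2‖ = 1 → x₀ + p.1 • p.2 ∈ U → M ≤ f (x₀ + p.1 • p.2) := by
  have hray : Continuous fun ξ' : E => x₀ + t₀ • ξ' := by fun_prop
  have hmem' : ∀ᶠ ξ' in 𝓝 ξ, x₀ + t₀ • ξ' ∈ U :=
    hray.continuousAt.preimage_mem_nhds (hU.mem_nhds hmem)
  have hlt' : ∀ᶠ ξ' in 𝓝 ξ, M < f (x₀ + t₀ • ξ') :=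
    continuousAt_const.eventually_lt
      ((hf.continuousAt (hU.mem_nhds hmem)).comp (f := fun ξ' => x₀ + t₀ • ξ')
        hray.continuousAt) hlt
  filter_upwards [(eventually_ge_atTop t₀).prod_mk (hmem'.and hlt')]
    with ⟨t, ξ'⟩ ⟨ht, hmem₀, hlt₀⟩ hξ' hmemt
  exact hlt₀.le.trans (hmono ξ' hξ' ⟨ht₀, hmem₀⟩ ⟨ht₀.trans ht, hmemt⟩ ht)

theorem eventually_cobounded_of_eventually_sphere {P : E → Prop} (x₀ : E)
    (h : ∀ᶠ t : ℝ in atTop, ∀ ξ : E, ‖ξ‖ = 1 → P (x₀ + t • ξ)) :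
    ∀ᶠ x in cobounded E, P x := by
  obtain ⟨T, hT⟩ := eventually_atTop.mp h
  filter_upwards [tendsto_norm_cobounded_atTop.eventually_ge_atTop (max T 1 + ‖x₀‖)] with x hx
  have hdist : max T 1 ≤ ‖x - x₀‖ := by linarith [norm_sub_norm_le x x₀]
  have hne : x - x₀ ≠ 0 := norm_pos_iff.mp (by linarith [le_max_right T 1])
  have hx : x = x₀ + ‖x - x₀‖ • (‖x - x₀‖⁻¹ • (x - x₀)) := by
    rw [smul_inv_smul₀ (norm_ne_zero_iff.mpr hne)]; abel
  rw [hx]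
  exact hT _ ((le_max_left T 1).trans hdist) _ (norm_smul_inv_norm hne)

end RaysInNormedSpace

def negOrthant (ι : Type*) : Set (EuclideanSpace ℝ ι) := {x | ∀ i, x i < 0}

theorem isOpen_negOrthant (ι : Type*) [Finite ι] : IsOpen (negOrthant ι) := by
  simp only [negOrthant, ofPred_forall]
  exact isOpen_iInter_of_finite fun i =>
    isOpen_lt (EuclideanSpace.proj (𝕜 := ℝ) i).continuous continuous_const

theorem eventually_le_near_ray_negOrthant {ι : Type*} [Fintype ι] {f : EuclideanSpace ℝ ι → ℝ}
    (hf : ContinuousOn f (negOrthant ι)) {x₀ : EuclideanSpace ℝ ι} (hx₀ : x₀ ∈ negOrthant ι)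
    (hmono : ∀ ξ : EuclideanSpace ℝ ι, ‖ξ‖ = 1 →
      MonotoneOn (fun t : ℝ => f (x₀ + t • ξ)) {t : ℝ | 0 ≤ t ∧ x₀ + t • ξ ∈ negOrthant ι})
    (hinf : ∀ ξ : EuclideanSpace ℝ ι, ‖ξ‖ = 1 →
      (∀ t : ℝ, 0 ≤ t → x₀ + t • ξ ∈ negOrthant ι) →
      Tendsto (fun t : ℝ => f (x₀ + t • ξ)) atTop atTop)
    (M : ℝ) {ξ : EuclideanSpace ℝ ι} (hξ : ‖ξ‖ = 1) :
    ∀ᶠ p : ℝ × EuclideanSpace ℝ ι in atTop ×ˢ 𝓝 ξ,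
      ‖p.2‖ = 1 → x₀ + p.1 • p.2 ∈ negOrthant ι → M ≤ f (x₀ + p.1 • p.2) := by
  by_cases hray : ∀ t : ℝ, 0 ≤ t → x₀ + t • ξ ∈ negOrthant ι
  · obtain ⟨t₀, hlt, ht₀⟩ :=
      (((hinf ξ hξ hray).eventually_gt_atTop M).and (eventually_ge_atTop 0)).exists
    exact eventually_le_of_lt_on_ray (isOpen_negOrthant ι) hf hmono ht₀ (hray t₀ ht₀) hlt
  · push Not at hray
    obtain ⟨t₀, ht₀, hout⟩ := hray
    obtain ⟨i, hi⟩ : ∃ i, 0 ≤ x₀ i + t₀ * ξ i := by simpa [negOrthant] using hout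
    have hξi : 0 < ξ i := pos_of_mul_pos_right (by linarith [hx₀ i]) ht₀
    filter_upwards
      [(tendsto_apply_add_smul_atTop (EuclideanSpace.proj i) x₀ hξi).eventually_gt_atTop 0]
      with p hp _ hmem
    exact absurd (hmem i) (not_lt.mpr hp.le)

/-- Properness lemma (Ge–Xu/Ge–Jiang): let `U = ℝⁿ_{<0}`, `f : U → ℝ` continuous, and
`u* ∈ U`. If along every unit ray from `u*` the function is monotone increasing as long
as the ray stays in `U`, and tends to `+∞` along rays entirely contained in `U`, then
`f(x) → +∞` as `‖x‖ → ∞` within `U`. -/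
theorem properness_lemma (n : ℕ) (f : EuclideanSpace ℝ (Fin n) → ℝ)
    (U : Set (EuclideanSpace ℝ (Fin n)))
    (hU : U = {x : EuclideanSpace ℝ (Fin n) | ∀ i, x i < 0})
    (hf : ContinuousOn f U)
    (ustar : EuclideanSpace ℝ (Fin n)) (hustar : ustar ∈ U)
    (hmono : ∀ ξ : EuclideanSpace ℝ (Fin n), ‖ξ‖ = 1 →
      MonotoneOn (fun t : ℝ => f (ustar + t • ξ)) {t : ℝ | 0 ≤ t ∧ ustar + t • ξ ∈ U})
    (hinf : ∀ ξ : EuclideanSpace ℝ (Fin n), ‖ξ‖ = 1 →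
      (∀ t : ℝ, 0 ≤ t → ustar + t • ξ ∈ U) →
      Tendsto (fun t : ℝ => f (ustar + t • ξ)) atTop atTop) :
    ∀ M : ℝ, ∃ R : ℝ, ∀ x ∈ U, R ≤ ‖x‖ → M ≤ f x := by
  intro M
  subst hU
  have hsphere : ∀ᶠ t : ℝ in atTop, ∀ ξ ∈ sphere (0 : EuclideanSpace ℝ (Fin n)) 1,
      ‖ξ‖ = 1 → ustar + t • ξ ∈ negOrthant (Fin n) → M ≤ f (ustar + t • ξ) :=
    Eventually.curry ((isCompact_sphere 0 1).mem_prod_nhdsSet_of_forall fun ξ hξ =>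
      eventually_le_near_ray_negOrthant hf hustar hmono hinf M
        (mem_sphere_zero_iff_norm.mp hξ)) |>.mono fun _ h => h.self_of_nhdsSet
  obtain ⟨R, -, hR⟩ := hasBasis_cobounded_norm.eventually_iff.mp <|
    eventually_cobounded_of_eventually_sphere
      (P := fun x => x ∈ negOrthant (Fin n) → M ≤ f x) ustar <|
      hsphere.mono fun _ h ξ hξ => h ξ (mem_sphere_zero_iff_norm.mpr hξ) hξ
  exact ⟨R, fun x hx hRx => hR hRx hx⟩
end

section
/- Let F: U → ℝ be a C¹ convex function on a convex open set U ⊆ ℝⁿ, and suppose F is C² and strictly convex (positive definite Hessian) on an open subset V ⊆ U. If u* ∈ V is a critical point of F (∇F(u*) = 0), then u* is the unique critical point of F in U. -/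
open Set

/-! A critical point of a differentiable convex function is a minimiser, and the minimisers of a
convex function form a convex set. So if `u ≠ u*` were another critical point, `F` would be
constant on the segment `[u*, u]`, and differentiating `t ↦ F (u* + t • (u - u*))` twice at
`t = 0` would give `D²F(u*) (u - u*, u - u*) = 0`, against positive definiteness. -/

theorem HasDerivWithinAt.eq_zero_of_eqOn_const {𝕜 F : Type*} [NontriviallyNormedField 𝕜]
    [NormedAddCommGroup F] [NormedSpace 𝕜 F] {f : 𝕜 → F} {f' c : F} {s : Set 𝕜} {x : 𝕜}
    (hf : HasDerivWithinAt f f' s x) (hs : UniqueDiffWithinAt 𝕜 s x)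
    (hc : EqOn f (fun _ => c) s) (hx : x ∈ s) : f' = 0 :=
  hs.eq_deriv s hf ((hasDerivWithinAt_const x s c).congr hc (hc hx))

section

variable {E : Type*} [NormedAddCommGroup E] [NormedSpace ℝ E] {s : Set E} {f : E → ℝ} {x y : E}

theorem ConvexOn.add_fderiv_le (hf : ConvexOn ℝ s f) (hx : x ∈ s) (hy : y ∈ s)
    {f' : E →L[ℝ] ℝ} (hf' : HasFDerivAt f f' x) : f x + f' (y - x) ≤ f y := by
  set L : ℝ →ᵃ[ℝ] E := AffineMap.lineMap x y
  have hline : ConvexOn ℝ (Icc 0 1) (f ∘ L) :=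
    (hf.comp_affineMap L).subset (fun _ ht => hf.1.lineMap_mem hx hy ht) (convex_Icc 0 1)
  have hderiv : HasDerivAt (f ∘ L) (f' (y - x)) 0 :=
    hf'.comp_hasDerivAt_of_eq 0 AffineMap.hasDerivAt_lineMap
      (AffineMap.lineMap_apply_zero x y).symm
  have hslope := hline.le_slope_of_hasDerivAt (left_mem_Icc.2 zero_le_one)
    (right_mem_Icc.2 zero_le_one) zero_lt_one hderiv
  simpa [slope_def_field, L, le_sub_iff_add_le'] using hslope

theorem ConvexOn.isMinOn_of_hasFDerivAt_zero (hf : ConvexOn ℝ s f) (hx : x ∈ s)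
    (hf' : HasFDerivAt f (0 : E →L[ℝ] ℝ) x) : IsMinOn f s x := fun y hy => by
  simpa using hf.add_fderiv_le hx hy hf'

theorem ConvexOn.eqOn_segment_of_isMinOn (hf : ConvexOn ℝ s f) (hfx : IsMinOn f s x)
    (hfy : IsMinOn f s y) (hx : x ∈ s) (hy : y ∈ s) : EqOn f (fun _ => f x) (segment ℝ x y) :=
  fun _ hz =>
    have hz' := (hf.convex_le (f x)).segment_subset ⟨hx, le_rfl⟩ ⟨hy, hfy hx⟩ hz
    le_antisymm hz'.2 (hfx hz'.1)

theorem fderiv_fderiv_apply_eq_zero_of_eqOn_segment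
    (hf : ∀ z ∈ segment ℝ x y, DifferentiableAt ℝ f z)
    (hf2 : DifferentiableAt ℝ (fderiv ℝ f) x) (hc : EqOn f (fun _ => f x) (segment ℝ x y)) :
    fderiv ℝ (fderiv ℝ f) x (y - x) (y - x) = 0 := by
  set L : ℝ →ᵃ[ℝ] E := AffineMap.lineMap x y
  have hL : MapsTo L (Icc 0 1) (segment ℝ x y) := by
    rw [segment_eq_image_lineMap]; exact mapsTo_image _ _
  set g : ℝ → ℝ := fun t => fderiv ℝ f (L t) (y - x)
  have hg : EqOn g (fun _ => 0) (Icc 0 1) := fun t ht =>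
    (((hf _ (hL ht)).hasFDerivAt.comp_hasDerivAt t AffineMap.hasDerivAt_lineMap).hasDerivWithinAt
      (s := Icc 0 1)).eq_zero_of_eqOn_const (uniqueDiffOn_Icc_zero_one t ht)
      (fun r hr => hc (hL hr)) ht
  have hg' : HasDerivAt g (fderiv ℝ (fderiv ℝ f) x (y - x) (y - x)) 0 := by
    have := (hf2.hasFDerivAt.clm_apply (hasFDerivAt_const (y - x) x)).comp_hasDerivAt_of_eq 0
      AffineMap.hasDerivAt_lineMap (AffineMap.lineMap_apply_zero x y).symm
    simp only [ContinuousLinearMap.comp_zero, zero_add, ContinuousLinearMap.flip_apply] at this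
    exact this
  have h0 : (0 : ℝ) ∈ Icc 0 1 := left_mem_Icc.2 zero_le_one
  exact hg'.hasDerivWithinAt.eq_zero_of_eqOn_const (uniqueDiffOn_Icc_zero_one 0 h0) hg h0

end

/-- Rigidity via convexity: a `C¹` convex function on a convex open set `U`, which is
`C²` with positive definite Hessian on an open subset `V ∋ u*`, has `u*` as its unique
critical point in `U` as soon as `∇F(u*) = 0`. -/
theorem unique_critical_point_of_convex (n : ℕ)
    (F : EuclideanSpace ℝ (Fin n) → ℝ)
    (U V : Set (EuclideanSpace ℝ (Fin n)))
    (hUopen : IsOpen U) (hUconv : Convex ℝ U) (hVopen : IsOpen V) (hVU : V ⊆ U)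
    (hC1 : ContDiffOn ℝ 1 F U) (hconv : ConvexOn ℝ U F)
    (hC2 : ContDiffOn ℝ 2 F V)
    (hHess : ∀ x ∈ V, ∀ ξ : EuclideanSpace ℝ (Fin n), ξ ≠ 0 →
      0 < iteratedFDeriv ℝ 2 F x ![ξ, ξ])
    (ustar : EuclideanSpace ℝ (Fin n)) (hustar : ustar ∈ V)
    (hcrit : gradient F ustar = 0) :
    ∀ u ∈ U, gradient F u = 0 → u = ustar := by
  intro u hu hgrad
  have hustarU : ustar ∈ U := hVU hustar
  have hdiff : ∀ x ∈ U, DifferentiableAt ℝ F x := fun x hx =>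
    (hC1.contDiffAt (hUopen.mem_nhds hx)).differentiableAt one_ne_zero
  have hmin : ∀ x ∈ U, gradient F x = 0 → IsMinOn F U x := fun x hx hx0 =>
    hconv.isMinOn_of_hasFDerivAt_zero hx <| by
      simpa [hx0] using (hdiff x hx).hasGradientAt.hasFDerivAt
  have hflat := hconv.eqOn_segment_of_isMinOn (hmin ustar hustarU hcrit) (hmin u hu hgrad)
    hustarU hu
  have hdiff2 : DifferentiableAt ℝ (fderiv ℝ F) ustar :=
    ((hC2.contDiffAt (hVopen.mem_nhds hustar)).fderiv_right le_rfl).differentiableAt one_ne_zero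
  have hzero := fderiv_fderiv_apply_eq_zero_of_eqOn_segment
    (fun z hz => hdiff z (hUconv.segment_subset hustarU hu hz)) hdiff2 hflat
  by_contra hne
  have hpos := hHess ustar hustar (u - ustar) (sub_ne_zero.mpr hne)
  rw [iteratedFDeriv_two_apply, Matrix.cons_val_zero, Matrix.cons_val_one, Matrix.cons_val_zero,
    hzero] at hpos
  exact hpos.false
end

section
/- Let (V, E, F) be the vertex, edge, and face sets of a triangulation of a closed surface, and for a nonempty proper subset A ⊆ V, partition the faces having at least one vertex in A into A₁, A₂, A₃ (faces with exactly 1, 2, 3 vertices in A). Then the Euler characteristic of the subcomplex F_A spanned by A satisfies χ(F_A) = |A| - |A₂|/2 - |A₃|/2. -/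
open Finset

/-- Euler characteristic identity for the subcomplex spanned by a vertex set `A` of a
triangulated closed surface: `χ(F_A) = |A| - |A₂|/2 - |A₃|/2`, where `A_i` is the set
of faces with exactly `i` vertices in `A`, edges of `F_A` are the edges of the
triangulation with both endpoints in `A` (each lying in exactly two faces, since the
surface is closed), the faces of `F_A` are those of `A₃`, and
`χ(F_A) = #vertices - #edges + #faces`. -/
theorem euler_char_subcomplex (V : Type*) [Fintype V] [DecidableEq V]
    (faces : Finset (Finset V)) (hface : ∀ f ∈ faces, f.card = 3)
    (A : Finset V) (hA : A.Nonempty) (hAproper : A ≠ Finset.univ)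
    (edges : Finset (Finset V))
    (hedges : edges = faces.sup (fun f => f.powersetCard 2))
    -- each edge with both endpoints in `A` lies in exactly two faces (closed surface):
    (hclosed : ∀ e ∈ edges, e ⊆ A → (faces.filter (fun f => e ⊆ f)).card = 2)
    (A₂ A₃ : Finset (Finset V))
    (hA₂ : A₂ = faces.filter (fun f => (f ∩ A).card = 2))
    (hA₃ : A₃ = faces.filter (fun f => (f ∩ A).card = 3)) :
    (A.card : ℚ) - (edges.filter (fun e => e ⊆ A)).card + A₃.card
      = (A.card : ℚ) - (A₂.card : ℚ) / 2 - (A₃.card : ℚ) / 2 := by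
  set S := edges.filter (fun e => e ⊆ A) with hS
  have hkey : 2 * S.card = A₂.card + 3 * A₃.card := by
    have h1 : ∑ e ∈ S, (faces.filter (fun f => e ⊆ f)).card = 2 * S.card := by
      rw [Finset.sum_congr rfl (fun e he => hclosed e (Finset.mem_filter.mp he).1
        (Finset.mem_filter.mp he).2), Finset.sum_const, smul_eq_mul, mul_comm]
    have h2 : ∑ e ∈ S, (faces.filter (fun f => e ⊆ f)).card
        = ∑ f ∈ faces, (S.filter (fun e => e ⊆ f)).card := by
      simp only [Finset.card_filter]
      rw [Finset.sum_comm]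
    have h3 : ∀ f ∈ faces, S.filter (fun e => e ⊆ f) = (f ∩ A).powersetCard 2 := by
      intro f hf
      ext e
      simp only [hS, hedges, Finset.mem_filter, Finset.mem_sup, Finset.mem_powersetCard]
      constructor
      · rintro ⟨⟨⟨g, hg, hge⟩, heA⟩, hef⟩
        exact ⟨Finset.subset_inter hef heA, hge.2⟩
      · rintro ⟨hefa, hcard⟩
        have hef : e ⊆ f := hefa.trans Finset.inter_subset_left
        have heA : e ⊆ A := hefa.trans Finset.inter_subset_right
        exact ⟨⟨⟨f, hf, ⟨hef, hcard⟩⟩, heA⟩, hef⟩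
    have h4 : ∑ f ∈ faces, (S.filter (fun e => e ⊆ f)).card
        = ∑ f ∈ faces, ((f ∩ A).card).choose 2 := by
      refine Finset.sum_congr rfl fun f hf => ?_
      rw [h3 f hf, Finset.card_powersetCard]
    have h5 : ∑ f ∈ faces, ((f ∩ A).card).choose 2
        = ∑ f ∈ faces, ((if (f ∩ A).card = 2 then 1 else 0)
            + 3 * (if (f ∩ A).card = 3 then 1 else 0)) := by
      refine Finset.sum_congr rfl fun f hf => ?_
      have hle : (f ∩ A).card ≤ 3 := by
        rw [← hface f hf]; exact Finset.card_le_card Finset.inter_subset_left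
      interval_cases h : (f ∩ A).card <;> simp
    rw [h1, h2, h4, h5, Finset.sum_add_distrib, ← Finset.mul_sum] at *
    rw [hA₂, hA₃, Finset.card_filter, Finset.card_filter]
  have hq : (2 : ℚ) * S.card = A₂.card + 3 * A₃.card := by exact_mod_cast hkey
  linarith
end
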